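/- Let 1 → K → G → Q → 1 be an extension of groups in which both K and Q are virtually cyclic groups. Then G is virtually abelian. -/

import Mathlib

/-- A group is virtually cyclic if it contains a cyclic subgroup of finite index. -/
def VirtuallyCyclic (G : Type*) [Group G] : Prop :=
  ∃ H : Subgroup G, IsCyclic H ∧ H.FiniteIndex

/-- A group is virtually abelian if it contains an abelian subgroup of finite index. -/
def VirtuallyAbelian (G : Type*) [Group G] : Prop :=
  ∃ H : Subgroup G, (∀ a ∈ H, ∀ b ∈ H, a * b = b * a) ∧ H.FiniteIndex

open Subgroup Nat

lemma relindex_zpowers_zpow {G : Type*} [Group G] {x : G} (hx : ¬IsOfFinOrder x) (M : ℤ) :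
    (zpowers (x ^ M)).relIndex (zpowers x) = M.natAbs := by
  classical
  set f : Multiplicative ℤ →* G := zpowersHom G x with hf
  have hinj : Function.Injective fun n : ℤ => x ^ n :=
    injective_zpow_iff_not_isOfFinOrder.mpr hx
  have hrange : f.range = zpowers x := by
    ext y
    constructor
    · rintro ⟨n, rfl⟩; exact ⟨n.toAdd, rfl⟩
    · rintro ⟨k, rfl⟩; exact ⟨Multiplicative.ofAdd k, rfl⟩
  have hcomap : Subgroup.comap f (zpowers (x ^ M))
      = AddSubgroup.toSubgroup (AddSubgroup.zmultiples M) := by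
    ext n
    simp only [Subgroup.mem_comap]
    constructor
    · rintro ⟨k, hk⟩
      have : x ^ (M * k) = x ^ (n.toAdd) := by
        rw [zpow_mul]; exact hk
      have := hinj this
      exact ⟨k, by show k • M = n.toAdd; rw [smul_eq_mul, mul_comm]; exact this⟩
    · rintro ⟨k, hk⟩
      refine ⟨k, ?_⟩
      show (x ^ M) ^ k = f n
      have hk' : k * M = n.toAdd := hk
      have : x ^ (M * k) = x ^ (n.toAdd) := by rw [mul_comm]; exact congrArg (x ^ ·) hk'
      rw [zpow_mul] at this
      exact this
  have h1 : (Subgroup.comap f (zpowers (x ^ M))).index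
      = (zpowers (x ^ M)).relIndex f.range := Subgroup.index_comap _ f
  rw [hcomap, hrange] at h1
  rw [← h1]
  show (AddSubgroup.toSubgroup (AddSubgroup.zmultiples M)).index = M.natAbs
  rw [AddSubgroup.index_toSubgroup, Int.index_zmultiples]

lemma subgroupOf_zpowers_normal {G : Type*} [Group G] (x : G) (J : Subgroup G) :
    (J.subgroupOf (zpowers x)).Normal := by
  constructor
  intro a ha b
  have hba : b * a * b⁻¹ = a := by
    ext
    push_cast
    have := Subgroup.mul_comm_of_mem_isMulCommutative (zpowers x) a.2 b.2
    rw [← this]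
    group
  rw [hba]
  exact ha

lemma key_conj {G : Type*} [Group G] {N : Subgroup G} (hN : N.Normal) {c : G} (hc : c ∈ N)
    (hord : ¬IsOfFinOrder c) {m : ℕ} (hm : m ≠ 0) (hrel : (zpowers c).relIndex N = m)
    (g : G) : g * c ^ (m !) * g⁻¹ = c ^ (m !) ∨ g * c ^ (m !) * g⁻¹ = (c ^ (m !))⁻¹ := by
  classical
  set d := g * c * g⁻¹ with hd
  have hdN : d ∈ N := hN.conj_mem c hc g
  have hconjpow : ∀ k : ℕ, g * c ^ k * g⁻¹ = d ^ k := fun k => (conj_pow).symm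
  have hordd : ¬IsOfFinOrder d := by
    intro h
    apply hord
    rw [isOfFinOrder_iff_pow_eq_one] at h ⊢
    obtain ⟨n, hn, h1⟩ := h
    refine ⟨n, hn, ?_⟩
    have h2 : g * c ^ n * g⁻¹ = 1 := by rw [hconjpow n, h1]
    calc c ^ n = g⁻¹ * (g * c ^ n * g⁻¹) * g := by group
    _ = 1 := by rw [h2]; group
  set f : G →* G := (MulAut.conj g).toMonoidHom with hfdef
  have hfinj : Function.Injective f := (MulAut.conj g).injective
  have hmapN : N.map f = N := by
    ext x
    constructor
    · rintro ⟨n, hn, rfl⟩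
      exact hN.conj_mem n hn g
    · intro hx
      refine ⟨g⁻¹ * x * g, by simpa using hN.conj_mem x hx g⁻¹, ?_⟩
      show g * (g⁻¹ * x * g) * g⁻¹ = x
      group
  have hfc : f c = d := rfl
  have hCd_rel : (zpowers d).relIndex N = m := by
    have h1 : (Subgroup.comap f (zpowers d)).relIndex N = (zpowers d).relIndex (N.map f) :=
      Subgroup.relIndex_comap (zpowers d) f N
    rw [hmapN] at h1
    have h2 : Subgroup.comap f (zpowers d) = zpowers c := by
      rw [← hfc, ← MonoidHom.map_zpowers, comap_map_eq_self_of_injective hfinj]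
    rw [h2] at h1
    rw [← h1, hrel]
  set C := zpowers c with hC
  set Cd := zpowers d with hCdd
  set I := C ⊓ Cd with hI
  have hCN : C ≤ N := zpowers_le_of_mem hc
  have hCdN : Cd ≤ N := zpowers_le_of_mem hdN
  set t := I.relIndex C with ht
  have h1 : t * m = I.relIndex N := by
    rw [← hrel]; exact relIndex_mul_relIndex I C N inf_le_left hCN
  have h2 : I.relIndex Cd * m = I.relIndex N := by
    rw [← hCd_rel]; exact relIndex_mul_relIndex I Cd N inf_le_right hCdN
  have htCd : t = Cd.relIndex C := by rw [ht, hI, inf_relIndex_left]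
  have ht0 : t ≠ 0 := by
    intro h0
    rw [htCd] at h0
    have h3 := Subgroup.relIndex_eq_zero_of_le_right hCN h0
    rw [hCd_rel] at h3
    exact hm h3
  have htt' : I.relIndex Cd = t :=
    Nat.eq_of_mul_eq_mul_right (Nat.pos_of_ne_zero hm) (h2.trans h1.symm)
  have ht_le : t ≤ m := by
    rw [htCd]
    have h4 := Subgroup.relIndex_le_of_le_right hCN (by rw [hCd_rel]; exact hm)
    rwa [hCd_rel] at h4
  -- c ^ t and d ^ t belong to I
  haveI hICn : (I.subgroupOf C).Normal := subgroupOf_zpowers_normal c I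
  haveI hICdn : (I.subgroupOf Cd).Normal := subgroupOf_zpowers_normal d I
  have hct : c ^ t ∈ I := by
    have h5 : (⟨c, mem_zpowers c⟩ : C) ^ (I.subgroupOf C).index ∈ I.subgroupOf C :=
      Subgroup.pow_index_mem _ _
    have h6 : (I.subgroupOf C).index = t := rfl
    rw [h6, Subgroup.mem_subgroupOf] at h5
    simpa using h5
  have hdt : d ^ t ∈ I := by
    have h5 : (⟨d, mem_zpowers d⟩ : Cd) ^ (I.subgroupOf Cd).index ∈ I.subgroupOf Cd :=
      Subgroup.pow_index_mem _ _
    have h6 : (I.subgroupOf Cd).index = t := htt'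
    rw [h6, Subgroup.mem_subgroupOf] at h5
    simpa using h5
  -- I is contained in zpowers (c ^ t) and zpowers (d ^ t)
  have hIE : ∀ (x : G), ¬IsOfFinOrder x → x ^ t ∈ I → I ≤ zpowers x →
      I.relIndex (zpowers x) = t → I ≤ zpowers (x ^ t) := by
    intro x hx hxt hIx hIt
    have hEI : zpowers (x ^ t) ≤ I := zpowers_le_of_mem hxt
    have hEC : (zpowers (x ^ t)).relIndex (zpowers x) = t := by
      have h7 := relindex_zpowers_zpow hx (t : ℤ)
      rwa [zpow_natCast, Int.natAbs_natCast] at h7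
    have hchain : (zpowers (x ^ t)).relIndex I * I.relIndex (zpowers x)
        = (zpowers (x ^ t)).relIndex (zpowers x) :=
      relIndex_mul_relIndex _ _ _ hEI hIx
    rw [hIt, hEC] at hchain
    have h8 : (zpowers (x ^ t)).relIndex I = 1 :=
      Nat.eq_of_mul_eq_mul_right (Nat.pos_of_ne_zero ht0) (by simpa using hchain)
    exact Subgroup.relIndex_eq_one.mp h8
  have hIc : I ≤ zpowers (c ^ t) := hIE c hord hct inf_le_left rfl
  have hId : I ≤ zpowers (d ^ t) := hIE d hordd hdt inf_le_right htt'
  -- compare generators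
  obtain ⟨s, hs'⟩ := hId hct
  obtain ⟨u, hu'⟩ := hIc hdt
  have hs : (d ^ t) ^ s = c ^ t := hs'
  have hu : (c ^ t) ^ u = d ^ t := hu'
  have hordct : ¬IsOfFinOrder (c ^ t) := by
    intro h
    apply hord
    rw [isOfFinOrder_iff_pow_eq_one] at h ⊢
    obtain ⟨n, hn, h1⟩ := h
    exact ⟨t * n, Nat.mul_pos (Nat.pos_of_ne_zero ht0) hn, by rw [pow_mul]; exact h1⟩
  have hinjct : Function.Injective (fun k : ℤ => (c ^ t) ^ k) :=
    injective_zpow_iff_not_isOfFinOrder.mpr hordct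
  have hus : u * s = 1 := by
    apply hinjct
    show (c ^ t) ^ (u * s) = (c ^ t) ^ (1 : ℤ)
    rw [zpow_one, zpow_mul, hu, hs]
  have hcases : d ^ t = c ^ t ∨ d ^ t = (c ^ t)⁻¹ := by
    rcases Int.eq_one_or_neg_one_of_mul_eq_one' hus with ⟨_, hs1⟩ | ⟨_, hs1⟩
    · left; rw [hs1, zpow_one] at hs; rw [hs]
    · right
      rw [hs1] at hs
      rw [← hs]
      simp
  obtain ⟨q, hq⟩ : t ∣ m ! := Nat.dvd_factorial (Nat.pos_of_ne_zero ht0) ht_le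
  rw [hconjpow (m !), hq, pow_mul, pow_mul]
  rcases hcases with hcd | hcd
  · left; rw [hcd]
  · right; rw [hcd, inv_pow]

lemma common_part {G : Type*} [Group G] (N : Subgroup G) [hNn : N.Normal]
    (hq : IsCyclic (G ⧸ N)) (z : G) (hzN : z ∈ N)
    (hconj : ∀ g : G, g * z * g⁻¹ = z ∨ g * z * g⁻¹ = z⁻¹)
    (htf : z ≠ 1 → ¬IsOfFinOrder z)
    (hrel : (zpowers z).relIndex N ≠ 0) : VirtuallyAbelian G := by
  classical
  set D := zpowers z with hD
  have hDnorm : ∀ (g x : G), x ∈ D → g * x * g⁻¹ ∈ D := by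
    rintro g _ ⟨k, rfl⟩
    have h : (g * z * g⁻¹) ^ k = g * z ^ k * g⁻¹ := conj_zpow
    rcases hconj g with h1 | h1
    · rw [← h, h1]; exact zpow_mem (mem_zpowers z) k
    · rw [← h, h1]; exact zpow_mem (inv_mem (mem_zpowers z)) k
  have htriv : ∀ x ∈ D, ∀ r : ℕ, r ≠ 0 → x ^ r = 1 → x = 1 := by
    rintro _ ⟨k, rfl⟩ r hr hxr
    by_cases hz1 : z = 1
    · simp [hz1]
    have hinj := injective_zpow_iff_not_isOfFinOrder.mpr (htf hz1)
    have h2 : z ^ (k * (r : ℤ)) = z ^ (0 : ℤ) := by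
      rw [zpow_mul, zpow_natCast, hxr, zpow_zero]
    have h3 : k * (r : ℤ) = 0 := hinj h2
    have h4 : k = 0 := by
      rcases mul_eq_zero.mp h3 with h | h
      · exact h
      · exact absurd (Int.ofNat_eq_zero.mp h) hr
    rw [h4]
    show z ^ (0 : ℤ) = 1
    exact zpow_zero z
  set S := centralizer ({z} : Set G) with hS
  have hmemS : ∀ g : G, g ∈ S ↔ g * z = z * g := fun g => mem_centralizer_singleton_iff
  have hScomm : ∀ g ∈ S, ∀ x ∈ D, g * x = x * g := by
    rintro g hg _ ⟨k, rfl⟩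
    have hzg : Commute g z := (hmemS g).mp hg
    exact (hzg.zpow_right k).eq
  have hSfin : S.FiniteIndex := by
    by_cases hz1 : z = 1
    · have hStop : S = ⊤ := by
        ext g; simp [hmemS, hz1]
      rw [hStop]; infer_instance
    · have hordz := htf hz1
      have hzz : z⁻¹ ≠ z := by
        intro h
        apply hordz
        rw [isOfFinOrder_iff_pow_eq_one]
        refine ⟨2, two_pos, ?_⟩
        rw [pow_two]
        nth_rewrite 2 [← h]
        simp
      set ε : G →* ℤˣ :=
        { toFun := fun g => if g * z * g⁻¹ = z then 1 else -1
          map_one' := by simp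
          map_mul' := by
            intro a b
            show (if a * b * z * (a * b)⁻¹ = z then (1 : ℤˣ) else -1)
                = (if a * z * a⁻¹ = z then (1 : ℤˣ) else -1)
                  * (if b * z * b⁻¹ = z then (1 : ℤˣ) else -1)
            have hab : a * b * z * (a * b)⁻¹ = a * (b * z * b⁻¹) * a⁻¹ := by group
            have hzinv : z⁻¹ ≠ z := hzz
            by_cases hb : b * z * b⁻¹ = z <;> by_cases ha : a * z * a⁻¹ = z
            · have h5 : a * b * z * (a * b)⁻¹ = z := by rw [hab, hb, ha]
              rw [if_pos h5, if_pos ha, if_pos hb, mul_one]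
            · have ha' : a * z * a⁻¹ = z⁻¹ := (hconj a).resolve_left ha
              have h5 : a * b * z * (a * b)⁻¹ = z⁻¹ := by rw [hab, hb, ha']
              rw [if_neg (fun hc => hzinv (h5.symm.trans hc)), if_neg ha, if_pos hb, mul_one]
            · have hb' : b * z * b⁻¹ = z⁻¹ := (hconj b).resolve_left hb
              have h5 : a * b * z * (a * b)⁻¹ = z⁻¹ := by
                rw [hab, hb']
                have h6 : a * z⁻¹ * a⁻¹ = (a * z * a⁻¹)⁻¹ := by group
                rw [h6, ha]
              rw [if_neg (fun hc => hzinv (h5.symm.trans hc)), if_pos ha, if_neg hb, one_mul]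
            · have ha' : a * z * a⁻¹ = z⁻¹ := (hconj a).resolve_left ha
              have hb' : b * z * b⁻¹ = z⁻¹ := (hconj b).resolve_left hb
              have h5 : a * b * z * (a * b)⁻¹ = z := by
                rw [hab, hb']
                have h6 : a * z⁻¹ * a⁻¹ = (a * z * a⁻¹)⁻¹ := by group
                rw [h6, ha']
                simp
              rw [if_pos h5, if_neg ha, if_neg hb]
              decide } with hε
      have hSker : S = ε.ker := by
        ext g
        rw [MonoidHom.mem_ker, hmemS]
        have hεg : ε g = (if g * z * g⁻¹ = z then 1 else -1) := rfl
        rw [hεg]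
        constructor
        · intro hgz
          have h7 : g * z * g⁻¹ = z := by rw [hgz]; group
          rw [if_pos h7]
        · intro hif
          by_cases hgc : g * z * g⁻¹ = z
          · calc g * z = (g * z * g⁻¹) * g := by group
            _ = z * g := by rw [hgc]
          · rw [if_neg hgc] at hif
            exact absurd hif (by decide)
      haveI : Finite (ε.range) := Set.toFinite _
      exact hSker ▸ (Subgroup.finiteIndex_ker ε)
  set Dn := D.subgroupOf N with hDn
  haveI hDnNorm : Dn.Normal := by
    constructor
    intro x hx g'
    rw [Subgroup.mem_subgroupOf] at hx ⊢
    push_cast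
    exact hDnorm g' x hx
  haveI hDnFin : Dn.FiniteIndex := ⟨hrel⟩
  haveI hQfin : Finite (↥N ⧸ Dn) := Subgroup.finite_quotient_of_finiteIndex (H := Dn)
  -- the subgroup T
  set T : Subgroup G :=
    { carrier := {g | g ∈ S ∧ ∀ n ∈ N, g * n * g⁻¹ * n⁻¹ ∈ D}
      one_mem' := ⟨one_mem S, fun n hn => by
        have h : (1 : G) * n * 1⁻¹ * n⁻¹ = 1 := by group
        rw [h]; exact one_mem D⟩
      mul_mem' := by
        rintro a b ⟨haS, ha⟩ ⟨hbS, hb⟩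
        refine ⟨mul_mem haS hbS, fun n hn => ?_⟩
        have e : a * b * n * (a * b)⁻¹ * n⁻¹
            = (a * (b * n * b⁻¹ * n⁻¹) * a⁻¹) * (a * n * a⁻¹ * n⁻¹) := by group
        rw [e]
        exact mul_mem (hDnorm a _ (hb n hn)) (ha n hn)
      inv_mem' := by
        rintro a ⟨haS, ha⟩
        refine ⟨inv_mem haS, fun n hn => ?_⟩
        have hn' : a⁻¹ * n * a ∈ N := by
          have h := hNn.conj_mem n hn a⁻¹
          simpa using h
        have h1 := ha (a⁻¹ * n * a) hn'
        have e : a * (a⁻¹ * n * a) * a⁻¹ * (a⁻¹ * n * a)⁻¹ = n * (a⁻¹ * n⁻¹ * a) := by group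
        rw [e] at h1
        have h2 := inv_mem h1
        have e2 : (n * (a⁻¹ * n⁻¹ * a))⁻¹ = a⁻¹ * n * (a⁻¹)⁻¹ * n⁻¹ := by group
        rwa [e2] at h2 } with hT
  have hmemT : ∀ g : G, g ∈ T ↔ g ∈ S ∧ ∀ n ∈ N, g * n * g⁻¹ * n⁻¹ ∈ D := fun g => Iff.rfl
  have hTS : T ≤ S := fun g hg => ((hmemT g).mp hg).1
  -- T has finite index
  have hFdef : ∀ g : ↥S, ∀ n : ↥N, ((g : G) * n * (g : G)⁻¹) ∈ N :=
    fun g n => hNn.conj_mem n n.2 g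
  set F : ↥S → (↥N ⧸ Dn) → (↥N ⧸ Dn) := fun g =>
    Quotient.map' (fun n : ↥N => (⟨(g : G) * n * (g : G)⁻¹, hFdef g n⟩ : ↥N))
      (by
        intro n₁ n₂ h12
        rw [QuotientGroup.leftRel_apply] at h12 ⊢
        rw [Subgroup.mem_subgroupOf] at h12 ⊢
        have e : (((⟨(g : G) * n₁ * (g : G)⁻¹, hFdef g n₁⟩ : ↥N))⁻¹
            * (⟨(g : G) * n₂ * (g : G)⁻¹, hFdef g n₂⟩ : ↥N) : ↥N)
            = (⟨(g : G) * ((n₁ : G)⁻¹ * n₂) * (g : G)⁻¹, by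
                have := hNn.conj_mem ((n₁ : G)⁻¹ * n₂) (mul_mem (inv_mem n₁.2) n₂.2) g
                exact this⟩ : ↥N) := by
          ext
          push_cast
          group
        rw [e]
        exact hDnorm (g : G) _ h12) with hF
  have hFmk : ∀ (g : ↥S) (n : ↥N),
      F g (QuotientGroup.mk n) = QuotientGroup.mk (⟨(g : G) * n * (g : G)⁻¹, hFdef g n⟩ : ↥N) :=
    fun g n => rfl
  have hdir1 : ∀ g h : ↥S, F g = F h → ((g : G)⁻¹ * h) ∈ T := by
    intro g h hgh
    refine (hmemT _).mpr ⟨mul_mem (inv_mem g.2) h.2, fun n hn => ?_⟩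
    set x : G := (g : G)⁻¹ * h with hx
    have h1 : ∀ n' : ↥N, ((g : G) * n' * (g : G)⁻¹)⁻¹ * ((h : G) * n' * (h : G)⁻¹) ∈ D := by
      intro n'
      have := congrFun hgh (QuotientGroup.mk n')
      rw [hFmk, hFmk] at this
      have h2 := (QuotientGroup.leftRel_apply).mp (Quotient.exact' this)
      rw [Subgroup.mem_subgroupOf] at h2
      exact h2
    -- turn into commutator condition for x
    have h3 : ∀ n' ∈ N, x * n' * x⁻¹ * n'⁻¹ ∈ D := by
      intro n' hn'
      have h4 := h1 ⟨n'⁻¹, inv_mem hn'⟩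
      have e : ((g : G) * ((⟨n'⁻¹, inv_mem hn'⟩ : ↥N) : G) * (g : G)⁻¹)⁻¹
          * ((h : G) * ((⟨n'⁻¹, inv_mem hn'⟩ : ↥N) : G) * (h : G)⁻¹)
          = (g : G) * n' * (g : G)⁻¹ * (h : G) * n'⁻¹ * (h : G)⁻¹ := by
        push_cast
        group
      rw [e] at h4
      have h5 := hDnorm ((g : G)⁻¹) _ h4
      have e2 : ((g : G))⁻¹ * ((g : G) * n' * (g : G)⁻¹ * (h : G) * n'⁻¹ * (h : G)⁻¹)
          * ((g : G)⁻¹)⁻¹ = n' * x * n'⁻¹ * x⁻¹ := by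
        rw [hx]; group
      rw [e2] at h5
      have h6 := inv_mem h5
      have e3 : (n' * x * n'⁻¹ * x⁻¹)⁻¹ = x * n' * x⁻¹ * n'⁻¹ := by group
      rwa [e3] at h6
    exact h3 n hn
  have hdir2 : ∀ g h : ↥S, ((g : G)⁻¹ * h) ∈ T → F g = F h := by
    intro g h hgh
    obtain ⟨hxS, hxc⟩ := (hmemT _).mp hgh
    set x : G := (g : G)⁻¹ * h with hx
    funext q
    refine Quotient.inductionOn' q ?_
    intro n
    show F g (Quotient.mk'' n) = F h (Quotient.mk'' n)
    have hmk : ∀ gg : ↥S, F gg (Quotient.mk'' n)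
        = Quotient.mk'' (⟨(gg : G) * n * (gg : G)⁻¹, hFdef gg n⟩ : ↥N) := fun gg => rfl
    rw [hmk, hmk]
    apply Quotient.sound'
    rw [QuotientGroup.leftRel_apply, Subgroup.mem_subgroupOf]
    show ((((⟨(g : G) * n * (g : G)⁻¹, hFdef g n⟩ : ↥N))⁻¹
        * (⟨(h : G) * n * (h : G)⁻¹, hFdef h n⟩ : ↥N) : ↥N) : G) ∈ D
    have hc1 := hxc ((n : G))⁻¹ (inv_mem n.2)
    rw [inv_inv] at hc1
    have hc2 := inv_mem hc1
    have e4 : (x * (n : G)⁻¹ * x⁻¹ * n)⁻¹ = (n : G)⁻¹ * x * n * x⁻¹ := by group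
    rw [e4] at hc2
    have hc3 := hDnorm (g : G) _ hc2
    have e5 : (g : G) * ((n : G)⁻¹ * x * n * x⁻¹) * (g : G)⁻¹
        = ((g : G) * n * (g : G)⁻¹)⁻¹ * ((h : G) * n * (h : G)⁻¹) := by
      rw [hx]; group
    rw [e5] at hc3
    exact hc3
  -- finite index of T
  set Tsub := T.subgroupOf S with hTsub
  set Φ : (↥S ⧸ Tsub) → ((↥N ⧸ Dn) → (↥N ⧸ Dn)) :=
    fun q => Quotient.liftOn' q F (by
      intro a b hab
      have h1 := QuotientGroup.leftRel_apply.mp hab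
      rw [Subgroup.mem_subgroupOf] at h1
      exact hdir2 a b h1) with hΦ
  have hΦinj : Function.Injective Φ := by
    intro q1 q2
    induction q1 using Quotient.inductionOn' with
    | h a =>
      induction q2 using Quotient.inductionOn' with
      | h b =>
        intro heq
        rw [hΦ] at heq
        have hFab : F a = F b := heq
        apply Quotient.sound'
        rw [QuotientGroup.leftRel_apply, Subgroup.mem_subgroupOf]
        exact hdir1 a b hFab
  haveI hfinq : Finite (↥S ⧸ Tsub) := Finite.of_injective Φ hΦinj
  have hTsub0 : Tsub.index ≠ 0 := by
    rw [Subgroup.index_eq_card]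
    exact Nat.card_ne_zero.mpr ⟨inferInstance, inferInstance⟩
  have hTidx : T.index ≠ 0 := by
    have hmul := Subgroup.relIndex_mul_index hTS
    rw [← hmul]
    exact Nat.mul_ne_zero hTsub0 hSfin.index_ne_zero
  haveI hTfin : T.FiniteIndex := ⟨hTidx⟩
  -- T is abelian
  have hcent : ∀ g ∈ T, ∀ n, n ∈ N → n ∈ T → g * n = n * g := by
    intro g hgT n hnN hnT
    obtain ⟨hgS, hgc⟩ := (hmemT g).mp hgT
    obtain ⟨hnS, _⟩ := (hmemT n).mp hnT
    set r := Dn.index with hr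
    have hr0 : r ≠ 0 := hDnFin.index_ne_zero
    set κ := g * n * g⁻¹ * n⁻¹ with hκ
    have hκD : κ ∈ D := hgc n hnN
    have hκn : n * κ = κ * n := hScomm n hnS κ hκD
    have hwj : ∀ j : ℕ, g * n ^ j * g⁻¹ * (n ^ j)⁻¹ = κ ^ j := by
      intro j
      induction j with
      | zero => simp
      | succ j ih =>
        have e6 : g * n ^ (j + 1) * g⁻¹ * (n ^ (j + 1))⁻¹
            = (g * n ^ j * g⁻¹ * (n ^ j)⁻¹) * (n ^ j * κ * (n ^ j)⁻¹) := by
          rw [hκ, pow_succ]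
          group
        have e7 : n ^ j * κ * (n ^ j)⁻¹ = κ := by
          have hcom : Commute n κ := hκn
          have h10 := (hcom.pow_left j).eq
          rw [h10]
          group
        rw [e6, e7, ih, pow_succ]
    have hnr : n ^ r ∈ D := by
      have h8 := Subgroup.pow_index_mem Dn (⟨n, hnN⟩ : ↥N)
      rw [Subgroup.mem_subgroupOf] at h8
      have e8 : (((⟨n, hnN⟩ : ↥N) ^ Dn.index : ↥N) : G) = n ^ r := by
        push_cast
        rfl
      rwa [e8] at h8
    have hwr : g * n ^ r * g⁻¹ * (n ^ r)⁻¹ = 1 := by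
      rw [hScomm g hgS (n ^ r) hnr]
      group
    have hκr : κ ^ r = 1 := by rw [← hwj r, hwr]
    have hκ1 : κ = 1 := htriv κ hκD r hr0 hκr
    have h9 : g * n = κ * (n * g) := by rw [hκ]; group
    rw [hκ1, one_mul] at h9
    exact h9
  -- conclusion: T is an abelian subgroup of finite index
  refine ⟨T, ?_, hTfin⟩
  intro a ha b hb
  haveI : IsCyclic (G ⧸ N) := hq
  set f : ↥T →* G ⧸ N := (QuotientGroup.mk' N).comp T.subtype with hf
  have hker : f.ker ≤ Subgroup.center ↥T := by
    intro x hx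
    have hxN : (x : G) ∈ N := by
      have h11 := MonoidHom.mem_ker.mp hx
      have h12 : ((x : G) : G ⧸ N) = 1 := h11
      exact (QuotientGroup.eq_one_iff _).mp h12
    rw [Subgroup.mem_center_iff]
    intro y
    ext
    push_cast
    exact hcent (y : G) y.2 (x : G) hxN x.2
  have h13 := commutative_of_cyclic_center_quotient f hker ⟨a, ha⟩ ⟨b, hb⟩
  exact Subtype.ext_iff.mp h13

lemma virtuallyAbelian_of_subgroup {G : Type*} [Group G] (T : Subgroup G)
    (hT : T.FiniteIndex) (h : VirtuallyAbelian ↥T) : VirtuallyAbelian G := by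
  obtain ⟨A, hA, hAfin⟩ := h
  refine ⟨A.map T.subtype, ?_, ?_⟩
  · rintro a ⟨x, hx, rfl⟩ b ⟨y, hy, rfl⟩
    have hxy := hA x hx y hy
    calc T.subtype x * T.subtype y = T.subtype (x * y) := by rw [map_mul]
    _ = T.subtype (y * x) := by rw [hxy]
    _ = T.subtype y * T.subtype x := by rw [map_mul]
  · constructor
    have hle : A.map T.subtype ≤ T := Subgroup.map_subtype_le A
    have hsub : (A.map T.subtype).subgroupOf T = A :=
      comap_map_eq_self_of_injective (Subgroup.subtype_injective T) A
    have hmul := Subgroup.relIndex_mul_index hle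
    rw [← hmul]
    apply Nat.mul_ne_zero
    · show ((A.map T.subtype).subgroupOf T).index ≠ 0
      rw [hsub]; exact hAfin.index_ne_zero
    · exact hT.index_ne_zero

lemma virtuallyCyclic_of_mulEquiv {A B : Type*} [Group A] [Group B] (e : A ≃* B)
    (h : VirtuallyCyclic A) : VirtuallyCyclic B := by
  obtain ⟨H, hcyc, hfin⟩ := h
  refine ⟨H.map e.toMonoidHom, ?_, ?_⟩
  · haveI := hcyc
    have hsurj : Function.Surjective (H.equivMapOfInjective e.toMonoidHom e.injective) :=
      (H.equivMapOfInjective e.toMonoidHom e.injective).surjective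
    exact isCyclic_of_surjective _ hsurj
  · constructor
    rw [Subgroup.map_equiv_eq_comap_symm' e H]
    rw [Subgroup.index_comap_of_surjective H e.symm.surjective]
    exact hfin.index_ne_zero

lemma lemA {G : Type*} [Group G] (N : Subgroup G) [hNn : N.Normal]
    (hvc : VirtuallyCyclic ↥N) (hq : IsCyclic (G ⧸ N)) : VirtuallyAbelian G := by
  classical
  obtain ⟨C', hC'cyc, hC'fin⟩ := hvc
  by_cases hfin : Finite ↥N
  · refine common_part N hq 1 (one_mem N) (fun g => by left; group)
      (fun h => absurd rfl h) ?_
    rw [zpowers_one_eq_bot, relIndex_bot_left]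
    exact Nat.card_ne_zero.mpr ⟨⟨1⟩, hfin⟩
  · haveI hInf : Infinite ↥N := not_finite_iff_infinite.mp hfin
    haveI := hC'cyc
    obtain ⟨gen, hgen⟩ := IsCyclic.exists_generator (α := ↥C')
    set cN : ↥N := (gen : ↥N) with hcN
    set c : G := (cN : G) with hc
    have hcmem : c ∈ N := cN.2
    have hord : ¬IsOfFinOrder c := by
      intro hco
      obtain ⟨n, hn, hcn⟩ := isOfFinOrder_iff_pow_eq_one.mp hco
      have hgN : ((gen ^ n : ↥C') : ↥N) = 1 := by
        apply Subtype.ext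
        push_cast
        exact hcn
      have hgenn : gen ^ n = 1 := Subtype.ext hgN
      have hgenfin : IsOfFinOrder gen := isOfFinOrder_iff_pow_eq_one.mpr ⟨n, hn, hgenn⟩
      have hfinzp : (zpowers gen : Set ↥C').Finite := finite_zpowers.mpr hgenfin
      haveI : Finite ↥(zpowers gen : Set ↥C') := hfinzp.to_subtype
      haveI : Finite ↥C' := Finite.of_injective
        (fun x : ↥C' => (⟨x, hgen x⟩ : ↥(zpowers gen : Set ↥C')))
        (fun a b hab => congrArg Subtype.val hab)
      have hcard := Subgroup.card_mul_index C'
      have hne : Nat.card ↥N ≠ 0 := by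
        rw [← hcard]
        exact Nat.mul_ne_zero (Nat.card_ne_zero.mpr ⟨⟨1⟩, inferInstance⟩) hC'fin.index_ne_zero
      exact hne (Nat.card_eq_zero_of_infinite)
    have hC'eq : C' = zpowers cN := by
      apply le_antisymm
      · intro x hx
        obtain ⟨k, hk⟩ := hgen ⟨x, hx⟩
        refine ⟨k, ?_⟩
        have := congrArg (fun y : ↥C' => (y : ↥N)) hk
        push_cast at this
        exact this
      · exact zpowers_le_of_mem gen.2
    have hmapzc : Subgroup.map N.subtype C' = zpowers c := by
      rw [hC'eq, MonoidHom.map_zpowers]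
      rfl
    set m := C'.index with hm
    have hm0 : m ≠ 0 := hC'fin.index_ne_zero
    have hrelc : (zpowers c).relIndex N = m := by
      rw [← hmapzc]
      show ((Subgroup.map N.subtype C').subgroupOf N).index = m
      rw [show (Subgroup.map N.subtype C').subgroupOf N = C' from
        comap_map_eq_self_of_injective (Subgroup.subtype_injective N) C']
    refine common_part N hq (c ^ (m !)) (pow_mem hcmem _)
      (key_conj hNn hcmem hord hm0 hrelc) ?_ ?_
    · intro _ hfo
      apply hord
      obtain ⟨n, hn, hcn⟩ := isOfFinOrder_iff_pow_eq_one.mp hfo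
      rw [← pow_mul] at hcn
      exact isOfFinOrder_iff_pow_eq_one.mpr
        ⟨m ! * n, Nat.mul_pos (Nat.factorial_pos m) hn, hcn⟩
    · have hle1 : zpowers (c ^ (m !)) ≤ zpowers c := zpowers_le_of_mem (npow_mem_zpowers c _)
      have hle2 : zpowers c ≤ N := zpowers_le_of_mem hcmem
      have hchain := relIndex_mul_relIndex (zpowers (c ^ (m !))) (zpowers c) N hle1 hle2
      rw [← hchain]
      apply Nat.mul_ne_zero
      · have hz := relindex_zpowers_zpow hord ((m ! : ℕ) : ℤ)
        rw [zpow_natCast, Int.natAbs_natCast] at hz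
        rw [hz]
        exact Nat.factorial_ne_zero m
      · rw [hrelc]; exact hm0

/-- Let `1 → K → G → Q → 1` be an extension of groups in which both `K` and `Q` are
virtually cyclic groups.  Then `G` is virtually abelian. -/
theorem stmt_6 {K G Q : Type*} [Group K] [Group G] [Group Q]
    (i : K →* G) (p : G →* Q) (hi : Function.Injective i) (hp : Function.Surjective p)
    (hexact : i.range = p.ker)
    (hK : VirtuallyCyclic K) (hQ : VirtuallyCyclic Q) :
    VirtuallyAbelian G := by
  obtain ⟨HQ, hHQcyc, hHQfin⟩ := hQ
  set G₁ := Subgroup.comap p HQ with hG₁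
  have hG₁fin : G₁.FiniteIndex := ⟨by
    rw [Subgroup.index_comap_of_surjective HQ hp]
    exact hHQfin.index_ne_zero⟩
  apply virtuallyAbelian_of_subgroup G₁ hG₁fin
  set N₁ : Subgroup ↥G₁ := (p.ker).subgroupOf G₁ with hN₁
  haveI : N₁.Normal := Subgroup.normal_subgroupOf
  have hker_le : p.ker ≤ G₁ := by
    intro x hx
    have : p x = 1 := hx
    show p x ∈ HQ
    rw [this]; exact one_mem _
  apply lemA N₁ ?_ ?_
  · -- VirtuallyCyclic ↥N₁
    have e1 : K ≃* i.range := MonoidHom.ofInjective hi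
    have e2 : i.range ≃* p.ker := MulEquiv.subgroupCongr hexact
    have e3 : ↥N₁ ≃* ↥(p.ker) := Subgroup.subgroupOfEquivOfLe hker_le
    exact virtuallyCyclic_of_mulEquiv (e1.trans (e2.trans e3.symm)) hK
  · -- IsCyclic quotient
    set q1 : ↥G₁ →* Q := p.comp G₁.subtype with hq1
    have hker : q1.ker = N₁ := by
      ext x
      show p (G₁.subtype x) = 1 ↔ x ∈ (p.ker).subgroupOf G₁
      rw [Subgroup.mem_subgroupOf]
      exact Iff.rfl
    have e4 := QuotientGroup.quotientKerEquivRange q1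
    have eq5 : (↥G₁ ⧸ q1.ker) ≃* (↥G₁ ⧸ N₁) := QuotientGroup.quotientMulEquivOfEq hker
    have hrange_le : q1.range ≤ HQ := by
      rintro _ ⟨x, rfl⟩
      exact x.2
    haveI : IsCyclic ↥HQ := hHQcyc
    have hcycr : IsCyclic q1.range := Subgroup.isCyclic_of_le hrange_le
    haveI := hcycr
    have efull := e4.symm.trans eq5
    exact isCyclic_of_surjective efull efull.surjective
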